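/- In a matching m on [N], a chord (i,j) with i < j is stable if and only if some vertex strictly between i and j is stable. -/
import Mathlib


/-- The set of endpoints of a finite set of chords (unordered pairs). -/
def endpointSet (R : Finset (Sym2 ℕ)) : Set ℕ := {x | ∃ c ∈ R, x ∈ c}

/-- A matching on the vertex set `S`: a finite set of pairwise disjoint chords
(unordered pairs of distinct elements of `S`).  Vertices of `S` not covered by
any chord are the unmatched vertices. -/
structure MatchingOn (S : Finset ℕ) where
  chords : Finset (Sym2 ℕ)
  not_diag : ∀ c ∈ chords, ¬ c.IsDiag
  mem_support : ∀ c ∈ chords, ∀ x ∈ c, x ∈ S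
  disj : ∀ c ∈ chords, ∀ c' ∈ chords, c ≠ c' → ∀ x ∈ c, x ∉ c'

/-- The number of unmatched vertices of a matching. -/
noncomputable def unmatchedCard {S : Finset ℕ} (m : MatchingOn S) : ℕ :=
  ((S : Set ℕ) \ endpointSet m.chords).ncard

/-- `c` has no element of `T` strictly between its endpoints. -/
def btwnFree (T : Set ℕ) (c : Sym2 ℕ) : Prop :=
  ¬ ∃ x ∈ T, ∃ a b, c = s(a, b) ∧ a < x ∧ x < b

/-- Given that the chords in `R` have already been removed, the chord `c` can be
removed: it is a chord of `m` not yet removed, with no surviving vertex strictly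
between its endpoints. -/
def removable {S : Finset ℕ} (m : MatchingOn S) (R : Finset (Sym2 ℕ)) (c : Sym2 ℕ) : Prop :=
  c ∈ m.chords ∧ c ∉ R ∧ btwnFree ((S : Set ℕ) \ endpointSet R) c

/-- `IsReduction m R L`: starting with the chords of `R` already removed, the list `L`
is a valid sequence of successive removals of short chords. -/
inductive IsReduction {S : Finset ℕ} (m : MatchingOn S) :
    Finset (Sym2 ℕ) → List (Sym2 ℕ) → Prop
  | nil (R : Finset (Sym2 ℕ)) : IsReduction m R []
  | cons (R : Finset (Sym2 ℕ)) (c : Sym2 ℕ) (L : List (Sym2 ℕ)) :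
      removable m R c → IsReduction m (insert c R) L → IsReduction m R (c :: L)

/-- A maximal reduction process of `m`: a valid removal sequence starting from `m`
after which no further chord can be removed. -/
def IsMaximalReduction {S : Finset ℕ} (m : MatchingOn S) (L : List (Sym2 ℕ)) : Prop :=
  IsReduction m ∅ L ∧ ∀ c, ¬ removable m L.toFinset c

/-- A chord is stable if it is never removed during any maximal reduction process. -/
def StableChord {S : Finset ℕ} (m : MatchingOn S) (c : Sym2 ℕ) : Prop :=
  ∀ L, IsMaximalReduction m L → c ∉ L

/-- A vertex is stable if it survives every maximal reduction process. -/
def StableVertex {S : Finset ℕ} (m : MatchingOn S) (x : ℕ) : Prop :=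
  x ∈ S ∧ ∀ L, IsMaximalReduction m L → x ∉ endpointSet L.toFinset

section Aux

variable {S : Finset ℕ} (m : MatchingOn S)

lemma endpointSet_mono {R R' : Finset (Sym2 ℕ)} (h : R ⊆ R') :
    endpointSet R ⊆ endpointSet R' := by
  rintro x ⟨c, hc, hx⟩; exact ⟨c, h hc, hx⟩

lemma btwnFree_anti {T T' : Set ℕ} (h : T' ⊆ T) {c : Sym2 ℕ} (hf : btwnFree T c) :
    btwnFree T' c := by
  rintro ⟨x, hx, a, b, h1, h2, h3⟩; exact hf ⟨x, h hx, a, b, h1, h2, h3⟩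

lemma removable_mono {R R' : Finset (Sym2 ℕ)} {c : Sym2 ℕ} (h : removable m R c)
    (hsub : R ⊆ R') (hc : c ∉ R') : removable m R' c := by
  refine ⟨h.1, hc, btwnFree_anti ?_ h.2.2⟩
  intro x hx
  exact ⟨hx.1, fun hm => hx.2 (endpointSet_mono hsub hm)⟩

lemma isReduction_stage {R : Finset (Sym2 ℕ)} {L : List (Sym2 ℕ)}
    (h : IsReduction m R L) :
    ∀ c ∈ L, ∃ R', R ⊆ R' ∧ R' ⊆ R ∪ L.toFinset ∧ removable m R' c := by
  induction h with
  | nil => simp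
  | cons R c L hrem hred ih =>
    intro d hd
    rcases List.mem_cons.mp hd with rfl | hd
    · exact ⟨R, subset_rfl, Finset.subset_union_left, hrem⟩
    · obtain ⟨R', h1, h2, h3⟩ := ih d hd
      refine ⟨R', (Finset.subset_insert c R).trans h1, ?_, h3⟩
      intro x hx
      have := h2 hx
      simp only [Finset.mem_union, Finset.mem_insert, List.toFinset_cons] at this ⊢
      tauto

lemma maximal_absorbs {L : List (Sym2 ℕ)} (hL : IsMaximalReduction m L) :
    ∀ (R : Finset (Sym2 ℕ)) (L' : List (Sym2 ℕ)), IsReduction m R L' →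
      R ⊆ L.toFinset → ∀ c ∈ L', c ∈ L.toFinset := by
  intro R L' h
  induction h with
  | nil => simp
  | cons R c L' hrem hred ih =>
    intro hsub d hd
    have hc : c ∈ L.toFinset := by
      by_contra hcn
      exact hL.2 c (removable_mono m hrem hsub hcn)
    rcases List.mem_cons.mp hd with rfl | hd
    · exact hc
    · exact ih (Finset.insert_subset hc hsub) d hd

lemma exists_extension : ∀ (n : ℕ) (R : Finset (Sym2 ℕ)), (m.chords \ R).card ≤ n →
    ∃ L, IsReduction m R L ∧ ∀ c, ¬ removable m (R ∪ L.toFinset) c := by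
  intro n
  induction n with
  | zero =>
    intro R hR
    refine ⟨[], IsReduction.nil R, ?_⟩
    intro c hc
    simp only [List.toFinset_nil, Finset.union_empty] at hc
    have : c ∈ m.chords \ R := Finset.mem_sdiff.mpr ⟨hc.1, hc.2.1⟩
    have := Finset.card_pos.mpr ⟨c, this⟩
    omega
  | succ n ih =>
    intro R hR
    by_cases h : ∃ c, removable m R c
    · obtain ⟨c, hcrem⟩ := h
      have hss : m.chords \ insert c R ⊂ m.chords \ R := by
        refine Finset.ssubset_iff_of_subset ?_ |>.mpr ?_
        · exact Finset.sdiff_subset_sdiff subset_rfl (Finset.subset_insert c R)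
        · exact ⟨c, Finset.mem_sdiff.mpr ⟨hcrem.1, hcrem.2.1⟩, by simp⟩
      have hcard : (m.chords \ insert c R).card ≤ n := by
        have := Finset.card_lt_card hss
        omega
      obtain ⟨L, h1, h2⟩ := ih (insert c R) hcard
      refine ⟨c :: L, IsReduction.cons R c L hcrem h1, ?_⟩
      intro d hd
      apply h2 d
      have hEq : insert c R ∪ L.toFinset = R ∪ (c :: L).toFinset := by
        ext x
        simp only [Finset.mem_union, Finset.mem_insert, List.toFinset_cons]
        tauto
      rwa [hEq]
    · refine ⟨[], IsReduction.nil R, ?_⟩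
      intro c hc
      simp only [List.toFinset_nil, Finset.union_empty] at hc
      exact h ⟨c, hc⟩

lemma exists_maximal : ∃ L, IsMaximalReduction m L := by
  obtain ⟨L, h1, h2⟩ := exists_extension m (m.chords \ ∅).card ∅ le_rfl
  refine ⟨L, h1, ?_⟩
  intro c hc
  exact h2 c (by simpa using hc)

end Aux

/-- A chord `(i, j)` of a matching on `[N]` is stable if and only if some vertex
strictly between `i` and `j` is stable. -/
theorem stmt10 (N : ℕ) (m : MatchingOn (Finset.Icc 1 N)) (i j : ℕ) (hij : i < j)
    (hc : s(i, j) ∈ m.chords) :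
    StableChord m s(i, j) ↔ ∃ x, i < x ∧ x < j ∧ StableVertex m x := by
  obtain ⟨L0, hL0⟩ := exists_maximal m
  constructor
  · intro hstable
    have hnot : s(i, j) ∉ L0.toFinset := fun h => hstable L0 hL0 (List.mem_toFinset.mp h)
    have hnb : ¬ btwnFree (((Finset.Icc 1 N) : Set ℕ) \ endpointSet L0.toFinset) s(i, j) := by
      intro hb
      exact hL0.2 s(i, j) ⟨hc, hnot, hb⟩
    rw [btwnFree, not_not] at hnb
    obtain ⟨x, hx, a, b, heq, hax, hxb⟩ := hnb
    have hij' : i < x ∧ x < j := by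
      rcases Sym2.eq_iff.mp heq with ⟨rfl, rfl⟩ | ⟨rfl, rfl⟩
      · exact ⟨hax, hxb⟩
      · omega
    refine ⟨x, hij'.1, hij'.2, by exact_mod_cast hx.1, ?_⟩
    intro L hL hxL
    have hsub : L.toFinset ⊆ L0.toFinset := by
      intro d hd
      exact maximal_absorbs m hL0 ∅ L hL.1 (Finset.empty_subset _) d (List.mem_toFinset.mp hd)
    exact hx.2 (endpointSet_mono hsub hxL)
  · rintro ⟨x, hix, hxj, hxS, hxstab⟩ L hL hmem
    obtain ⟨R', hR1, hR2, hrem⟩ := isReduction_stage m hL.1 _ hmem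
    apply hrem.2.2
    refine ⟨x, ⟨by exact_mod_cast hxS, ?_⟩, i, j, rfl, hix, hxj⟩
    intro hx
    apply hxstab L hL
    have hsub : R' ⊆ L.toFinset := by simpa using hR2
    exact endpointSet_mono hsub hx
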